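/- Let Γ be a group with trivial homomorphism φ: Γ → ℂ^× (φ(α) = 1 for all α). Then a Γ-vertex algebra structure on V is exactly the same as a vertex algebra structure on V together with an action of Γ on V by vertex algebra automorphisms: given a Γ-vertex algebra (V, {Y_α}, 𝟏), the operators R_α(v) = lim_{x→0} Y_α(v,x)𝟏 define a Γ-action by automorphisms of the vertex algebra (V, Y₁, 𝟏) and Y_α(v,x) = Y₁(R_α v, x); conversely any vertex algebra with a Γ-action by automorphisms R_α yields a Γ-vertex algebra via Y_α(v,x) := Y(R_α v, x). -/
import Mathlib


/-- Generalized binomial coefficient `binom(n, i)` for `n : ℤ`. -/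
noncomputable def genBinom (n : ℤ) (i : ℕ) : ℂ :=
  (∏ j ∈ Finset.range i, ((n : ℂ) - j)) / (Nat.factorial i : ℂ)

/-- `(V, {Y_α}, 𝟏)` is a `Γ`-vertex algebra (for a group `Γ` with homomorphism
`φ : Γ → ℂ^×`), in terms of modes `Y α u v n = u_{(α,n)}v` where
`Y_α(u,x) = Σ u_{(α,n)} x^{−n−1}`: truncation, vacuum, creation
(`Y_α(v,x)𝟏 ∈ V[[x]]`, `lim_{x→0} Y₁(v,x)𝟏 = v`), and the component form of the
`Γ`-Jacobi identity, with `γ = φ(β)⁻¹φ(α)`. -/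
def IsGammaVA {Γ V : Type*} [Group Γ] [AddCommGroup V] [Module ℂ V]
    (φ : Γ →* ℂˣ) (Y : Γ → V →ₗ[ℂ] V →ₗ[ℂ] (ℤ → V)) (vone : V) : Prop :=
  (∀ (α : Γ) (u v : V), ∃ N : ℤ, ∀ n ≥ N, Y α u v n = 0) ∧
  (∀ (α : Γ) (v : V) (n : ℤ), Y α vone v n = if n = -1 then v else 0) ∧
  (∀ (α : Γ) (v : V) (n : ℤ), 0 ≤ n → Y α v vone n = 0) ∧
  (∀ v : V, Y 1 v vone (-1) = v) ∧
  (∀ (α β : Γ) (u v w : V) (l m n : ℤ),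
    (∑ᶠ i : ℕ, (genBinom l i * (-((((φ β)⁻¹ * φ α : ℂˣ) : ℂ))) ^ i) •
        Y α u (Y β v w (n + (i : ℤ))) (m + l - (i : ℤ)))
      - (∑ᶠ i : ℕ, (genBinom l i * (-((((φ β)⁻¹ * φ α : ℂˣ) : ℂ))) ^ (l - (i : ℤ))) •
        Y β v (Y α u w (m + (i : ℤ))) (n + l - (i : ℤ)))
      = ∑ᶠ i : ℕ, (genBinom m i * ((((φ β)⁻¹ * φ α : ℂˣ) : ℂ)) ^ (m - (i : ℤ))) •
        Y β (Y (β⁻¹ * α) u v (l + (i : ℤ))) w (m + n - (i : ℤ)))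


/-- `(V, Y, 𝟏)` is an ordinary vertex algebra (the case `Γ = {1}`, `γ = 1`),
in terms of modes `Y u v n = uₙv` where `Y(u,x) = Σ uₙ x^{−n−1}`. -/
def IsVA {V : Type*} [AddCommGroup V] [Module ℂ V]
    (Y : V →ₗ[ℂ] V →ₗ[ℂ] (ℤ → V)) (vone : V) : Prop :=
  (∀ u v : V, ∃ N : ℤ, ∀ n ≥ N, Y u v n = 0) ∧
  (∀ (v : V) (n : ℤ), Y vone v n = if n = -1 then v else 0) ∧
  (∀ (v : V) (n : ℤ), 0 ≤ n → Y v vone n = 0) ∧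
  (∀ v : V, Y v vone (-1) = v) ∧
  (∀ (u v w : V) (l m n : ℤ),
    (∑ᶠ i : ℕ, (genBinom l i * (-1 : ℂ) ^ i) •
        Y u (Y v w (n + (i : ℤ))) (m + l - (i : ℤ)))
      - (∑ᶠ i : ℕ, (genBinom l i * (-1 : ℂ) ^ (l - (i : ℤ))) •
        Y v (Y u w (m + (i : ℤ))) (n + l - (i : ℤ)))
      = ∑ᶠ i : ℕ, genBinom m i • Y (Y u v (l + (i : ℤ))) w (m + n - (i : ℤ)))

lemma genBinom_zero_right (l : ℤ) : genBinom l 0 = 1 := by simp [genBinom]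

lemma genBinom_zero_left {i : ℕ} (hi : i ≠ 0) : genBinom 0 i = 0 := by
  have h0 : (0:ℕ) ∈ Finset.range i := Finset.mem_range.mpr (Nat.pos_of_ne_zero hi)
  unfold genBinom
  rw [Finset.prod_eq_zero h0 (by simp)]
  simp

lemma genBinom_neg_one (i : ℕ) : genBinom (-1) i = (-1)^i := by
  have h : ∏ j ∈ Finset.range i, ((-1:ℂ) - j) = (-1)^i * (Nat.factorial i : ℂ) := by
    induction i with
    | zero => simp
    | succ k ih =>
      rw [Finset.prod_range_succ, ih, Nat.factorial_succ]
      push_cast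
      ring
  unfold genBinom
  rw [show ((-1 : ℤ) : ℂ) = (-1 : ℂ) by norm_num, h]
  have : (Nat.factorial i : ℂ) ≠ 0 := Nat.cast_ne_zero.mpr (Nat.factorial_ne_zero i)
  field_simp

section
variable {Γ V : Type*} [Group Γ] [AddCommGroup V] [Module ℂ V]
  (φ : Γ →* ℂˣ) (Y : Γ → V →ₗ[ℂ] V →ₗ[ℂ] (ℤ → V)) (vone : V)

lemma gva_star (hφ : ∀ α, φ α = 1) (h : IsGammaVA φ Y vone)
    (α β : Γ) (u w : V) (n : ℤ) :
    Y α u w n = Y β (Y (β⁻¹ * α) u vone (-1)) w n := by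
  obtain ⟨htr, hvac, hcre, hone, hJac⟩ := h
  have hγ : ((((φ β)⁻¹ * φ α : ℂˣ)) : ℂ) = 1 := by rw [hφ, hφ]; simp
  have hJ := hJac α β u vone w (-1) 0 n
  simp only [hγ] at hJ
  have hS3 : (∑ᶠ (i : ℕ), (genBinom 0 i * (1:ℂ) ^ ((0:ℤ) - (i:ℤ))) •
      Y β (Y (β⁻¹ * α) u vone (-1 + (i:ℤ))) w (0 + n - (i:ℤ)))
      = Y β (Y (β⁻¹ * α) u vone (-1)) w n := by
    rw [finsum_eq_single _ 0
      (fun i hi => by rw [genBinom_zero_left hi, zero_mul, zero_smul])]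
    norm_num [genBinom_zero_right]
  rw [hS3] at hJ
  rcases le_or_gt 0 n with hn | hn
  · -- n ≥ 0 : Sum1 = 0, Sum2 = (-1) • Y α u w n
    have hS1 : (∑ᶠ (i : ℕ), (genBinom (-1) i * (-1:ℂ) ^ i) •
        Y α u (Y β vone w (n + (i:ℤ))) (0 + -1 - (i:ℤ))) = 0 := by
      refine (finsum_congr (fun i => ?_)).trans finsum_zero
      rw [hvac, if_neg (by omega : ¬ n + (i:ℤ) = -1), map_zero]
      simp
    have hS2 : (∑ᶠ (i : ℕ), (genBinom (-1) i * (-1:ℂ) ^ ((-1:ℤ) - (i:ℤ))) •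
        Y β vone (Y α u w (0 + (i:ℤ))) (n + -1 - (i:ℤ))) = (-1:ℂ) • Y α u w n := by
      rw [finsum_eq_single _ n.toNat (fun i hi => by
        rw [hvac, if_neg (by omega : ¬ n + -1 - (i:ℤ) = -1), smul_zero])]
      rw [hvac, if_pos (by omega : n + -1 - (n.toNat:ℤ) = -1),
        show (0 : ℤ) + (n.toNat:ℤ) = n by omega, genBinom_neg_one,
        show ((-1:ℂ))^n.toNat = (-1:ℂ)^(n.toNat:ℤ) from (zpow_natCast _ _).symm,
        ← zpow_add₀ (by norm_num : (-1:ℂ) ≠ 0),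
        show (n.toNat:ℤ) + (-1 - (n.toNat:ℤ)) = -1 by ring]
      norm_num
    rw [hS1, hS2] at hJ
    rw [← hJ]
    simp
  · -- n < 0 : Sum1 = Y α u w n, Sum2 = 0
    have hS1 : (∑ᶠ (i : ℕ), (genBinom (-1) i * (-1:ℂ) ^ i) •
        Y α u (Y β vone w (n + (i:ℤ))) (0 + -1 - (i:ℤ))) = Y α u w n := by
      rw [finsum_eq_single _ (-1 - n).toNat (fun i hi => by
        rw [hvac, if_neg (by omega : ¬ n + (i:ℤ) = -1), map_zero]
        simp)]
      rw [hvac, if_pos (by omega : n + ((-1 - n).toNat:ℤ) = -1),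
        show (0 : ℤ) + -1 - ((-1 - n).toNat:ℤ) = n by omega, genBinom_neg_one,
        ← mul_pow]
      norm_num
    have hS2 : (∑ᶠ (i : ℕ), (genBinom (-1) i * (-1:ℂ) ^ ((-1:ℤ) - (i:ℤ))) •
        Y β vone (Y α u w (0 + (i:ℤ))) (n + -1 - (i:ℤ))) = 0 := by
      refine (finsum_congr (fun i => ?_)).trans finsum_zero
      rw [hvac, if_neg (by omega : ¬ n + -1 - (i:ℤ) = -1), smul_zero]
    rw [hS1, hS2] at hJ
    rw [← hJ]
    simp

lemma gva_star2 (hφ : ∀ α, φ α = 1) (h : IsGammaVA φ Y vone)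
    (α β : Γ) (u v : V) (l : ℤ) :
    Y α u (Y β v vone (-1)) l = Y β (Y (β⁻¹ * α) u v l) vone (-1) := by
  obtain ⟨htr, hvac, hcre, hone, hJac⟩ := h
  have hγ : ((((φ β)⁻¹ * φ α : ℂˣ)) : ℂ) = 1 := by rw [hφ, hφ]; simp
  have hJ := hJac α β u v vone l 0 (-1)
  simp only [hγ] at hJ
  have hS1 : (∑ᶠ (i : ℕ), (genBinom l i * (-1:ℂ) ^ i) •
      Y α u (Y β v vone (-1 + (i:ℤ))) (0 + l - (i:ℤ)))
      = Y α u (Y β v vone (-1)) l := by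
    rw [finsum_eq_single _ 0 (fun i hi => by
      rw [hcre _ _ _ (by omega : (0:ℤ) ≤ -1 + (i:ℤ)), map_zero]
      simp)]
    norm_num [genBinom_zero_right]
  have hS2 : (∑ᶠ (i : ℕ), (genBinom l i * (-1:ℂ) ^ (l - (i:ℤ))) •
      Y β v (Y α u vone (0 + (i:ℤ))) (-1 + l - (i:ℤ))) = 0 := by
    refine (finsum_congr (fun i => ?_)).trans finsum_zero
    rw [hcre _ _ _ (by omega : (0:ℤ) ≤ 0 + (i:ℤ)), map_zero]
    simp
  have hS3 : (∑ᶠ (i : ℕ), (genBinom 0 i * (1:ℂ) ^ ((0:ℤ) - (i:ℤ))) •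
      Y β (Y (β⁻¹ * α) u v (l + (i:ℤ))) vone (0 + -1 - (i:ℤ)))
      = Y β (Y (β⁻¹ * α) u v l) vone (-1) := by
    rw [finsum_eq_single _ 0
      (fun i hi => by rw [genBinom_zero_left hi, zero_mul, zero_smul])]
    norm_num [genBinom_zero_right]
  rw [hS1, hS2, hS3] at hJ
  rw [← hJ, sub_zero]

end

/-- let `Γ` be a group with the *trivial* homomorphism
`φ : Γ → ℂ^×`.  Then a `Γ`-vertex algebra structure is exactly an ordinary
vertex algebra structure together with an action of `Γ` by vertex algebra
automorphisms.

Part 1: if `(V, {Y_α}, 𝟏)` is a `Γ`-vertex algebra, then `(V, Y₁, 𝟏)` is a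
vertex algebra, the maps `R_α(v) = lim_{x→0}Y_α(v,x)𝟏 = Y α v 𝟏 (−1)` define an
action of `Γ` by automorphisms of `(V, Y₁, 𝟏)`, and `Y_α(v,x) = Y₁(R_α v, x)`.

Part 2: conversely, if `(V, Y, 𝟏)` is a vertex algebra and `R : Γ → GL(V)` is an
action of `Γ` by vertex algebra automorphisms, then `Y_α(u,x) := Y(R_α u, x)`
makes `V` a `Γ`-vertex algebra. -/
theorem stmt_12 (Γ : Type*) [Group Γ] (φ : Γ →* ℂˣ) (hφ : ∀ α, φ α = 1)
    (V : Type*) [AddCommGroup V] [Module ℂ V] :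
    (∀ (Y : Γ → V →ₗ[ℂ] V →ₗ[ℂ] (ℤ → V)) (vone : V), IsGammaVA φ Y vone →
      IsVA (Y 1) vone ∧
      (∀ v : V, Y 1 v vone (-1) = v) ∧
      (∀ (α β : Γ) (v : V),
        Y (α * β) v vone (-1) = Y α (Y β v vone (-1)) vone (-1)) ∧
      (∀ α : Γ, Y α vone vone (-1) = vone) ∧
      (∀ (α : Γ) (u v : V) (n : ℤ),
        Y α (Y 1 u v n) vone (-1)
          = Y 1 (Y α u vone (-1)) (Y α v vone (-1)) n) ∧
      (∀ (α : Γ) (u v : V) (n : ℤ),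
        Y α u v n = Y 1 (Y α u vone (-1)) v n)) ∧
    (∀ (Y₀ : V →ₗ[ℂ] V →ₗ[ℂ] (ℤ → V)) (vone : V) (R : Γ → V →ₗ[ℂ] V),
      IsVA Y₀ vone →
      (∀ v : V, R 1 v = v) →
      (∀ (α β : Γ) (v : V), R (α * β) v = R α (R β v)) →
      (∀ α : Γ, R α vone = vone) →
      (∀ (α : Γ) (u v : V) (n : ℤ), R α (Y₀ u v n) = Y₀ (R α u) (R α v) n) →
      IsGammaVA φ (fun α => Y₀ ∘ₗ R α) vone) := by

  constructor
  · -- Part 1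
    intro Y vone h
    have hstar := gva_star φ Y vone hφ h
    have hstar2 := gva_star2 φ Y vone hφ h
    obtain ⟨htr, hvac, hcre, hone, hJac⟩ := h
    refine ⟨?_, hone, ?_, ?_, ?_, ?_⟩
    · -- IsVA (Y 1)
      refine ⟨fun u v => htr 1 u v, fun v n => hvac 1 v n,
        fun v n hn => hcre 1 v n hn, hone, ?_⟩
      intro u v w l m n
      have hγ : ((((φ 1)⁻¹ * φ 1 : ℂˣ)) : ℂ) = 1 := by rw [hφ]; simp
      have hJ := hJac 1 1 u v w l m n
      simp only [hγ, inv_one, one_mul, one_zpow, mul_one] at hJ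
      exact hJ
    · -- R is multiplicative
      intro α β v
      have := hstar (α * β) α v vone (-1)
      simpa [inv_mul_cancel_left] using this
    · -- R α vone = vone
      intro α
      rw [hvac]
      simp
    · -- R α is an automorphism
      intro α u v n
      have h2 := hstar2 α α u v n
      rw [inv_mul_cancel] at h2
      rw [← h2]
      have h3 := hstar α 1 u (Y α v vone (-1)) n
      simpa [inv_one, one_mul] using h3
    · -- Y α u = Y 1 (R α u)
      intro α u v n
      have h3 := hstar α 1 u v n
      simpa [inv_one, one_mul] using h3
  · -- Part 2
    intro Y₀ vone R hVA h1 hmul hvone hcomm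
    obtain ⟨htr, hvac, hcre, hone, hJac⟩ := hVA
    refine ⟨?_, ?_, ?_, ?_, ?_⟩
    · intro α u v
      exact htr (R α u) v
    · intro α v n
      simp only [LinearMap.comp_apply, hvone]
      exact hvac v n
    · intro α v n hn
      simp only [LinearMap.comp_apply]
      exact hcre (R α v) n hn
    · intro v
      simp only [LinearMap.comp_apply, h1]
      exact hone v
    · intro α β u v w l m n
      have hγ : ((((φ β)⁻¹ * φ α : ℂˣ)) : ℂ) = 1 := by rw [hφ, hφ]; simp
      simp only [hγ, LinearMap.comp_apply]
      have key : ∀ k : ℤ, R β (Y₀ (R (β⁻¹ * α) u) v k) = Y₀ (R α u) (R β v) k := by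
        intro k
        rw [hcomm, ← hmul, mul_inv_cancel_left]
      simp only [key, one_zpow, mul_one]
      exact hJac (R α u) (R β v) w l m n
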